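/- arXiv:2003.10900 — 4 statements merged into one kernel-verified Lean document; each statement's English description precedes it below -/
import Mathlib

section
/- Let λ be a partition, r ∈ ℕ, and for each i ≥ 0 set b_i = λ(i)_{r+1} where λ = Σ p^i·λ(i) is the p-adic expansion, and b = Σ p^i b_i = λ_{r+1}. Then the truncated partition λ_{≤r} − (b^r) (subtracting b from each of the first r parts of (λ_1,…,λ_r)) has p-adic expansion Σ_{i≥0} p^i·(λ(i)_{≤r} − (b_i^r)); in particular each λ(i)_{≤r} − (b_i^r) is a p-restricted partition. -/
open scoped BigOperators

/-- `l : ℕ → ℕ` (0-indexed) represents a partition: antitone with finitely many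
nonzero parts. -/
def IsPartitionFun (l : ℕ → ℕ) : Prop :=
  Antitone l ∧ ∃ N, ∀ i, N ≤ i → l i = 0

/-- `l` is a `p`-restricted partition: `0 ≤ l i − l (i+1) ≤ p − 1` for all `i`. -/
def PRestrictedFun (p : ℕ) (l : ℕ → ℕ) : Prop :=
  IsPartitionFun l ∧ ∀ i, l i - l (i + 1) ≤ p - 1

/-- Let `λ` be a partition with `p`-adic expansion `λ = Σ p^i·λ(i)`,
let `r : ℕ`, `b_i = λ(i)_{r+1}` (0-indexed: `c i r`) and `b = Σ p^i b_i = λ_{r+1}`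
(0-indexed: `l r`).  Then the truncated partition `λ_{≤r} − (b^r)` (subtract `b` from each
of the first `r` parts) has `p`-adic expansion `Σ_{i≥0} p^i·(λ(i)_{≤r} − (b_i^r))`;
in particular each `λ(i)_{≤r} − (b_i^r)` is a `p`-restricted partition. -/
theorem stmt1 (p r : ℕ) (hp : p.Prime) (l : ℕ → ℕ) (hl : IsPartitionFun l)
    (c : ℕ → ℕ → ℕ) (hres : ∀ i, PRestrictedFun p (c i))
    (hcfin : {i | c i ≠ 0}.Finite)
    (hexp : ∀ j, l j = ∑ᶠ i, p ^ i * c i j) :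
    l r = ∑ᶠ i, p ^ i * c i r ∧
    (∀ i, PRestrictedFun p (fun j => if j < r then c i j - c i r else 0)) ∧
      (∀ j, (if j < r then l j - l r else 0) =
        ∑ᶠ i, p ^ i * (if j < r then c i j - c i r else 0)) := by
  refine ⟨hexp r, ?_, ?_⟩
  · intro i
    obtain ⟨⟨hanti, N, hN⟩, hd⟩ := hres i
    refine ⟨⟨?_, r, fun j hj => by simp [Nat.not_lt.2 hj]⟩, ?_⟩
    · intro j1 j2 h12
      by_cases h2 : j2 < r
      · have h1 : j1 < r := lt_of_le_of_lt h12 h2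
        simp only [if_pos h1, if_pos h2]
        exact Nat.sub_le_sub_right (hanti h12) _
      · simp [h2]
    · intro j
      by_cases h1 : j < r
      · by_cases h2 : j + 1 < r
        · simp only [if_pos h1, if_pos h2]
          have hr1 : c i r ≤ c i (j + 1) := hanti h2.le
          have hab : c i (j + 1) ≤ c i j := hanti (Nat.le_succ j)
          have := hd j
          omega
        · have hjr : j + 1 = r := by omega
          simp only [if_pos h1, if_neg h2]
          have := hd j
          rw [hjr] at this
          omega
      · simp [h1]
  · intro j
    by_cases hj : j < r
    · simp only [if_pos hj]
      set s := hcfin.toFinset with hs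
      have hmem : ∀ i, i ∈ s ↔ c i ≠ 0 := by
        intro i; simp [hs, Set.Finite.mem_toFinset]
      have key : ∀ g : ℕ → ℕ, (∀ i, (∀ k, c i k = 0) → g i = 0) →
          ∑ᶠ i, p ^ i * g i = ∑ i ∈ s, p ^ i * g i := by
        intro g hg
        apply finsum_eq_finset_sum_of_support_subset
        intro i hi
        simp only [Function.mem_support] at hi
        rw [Finset.mem_coe, hmem]
        intro h0
        apply hi
        rw [hg i (fun k => by rw [h0]; rfl)]
        ring
      have h1 : ∑ᶠ i, p ^ i * c i j = ∑ i ∈ s, p ^ i * c i j :=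
        key _ (fun i h => h j)
      have h2 : ∑ᶠ i, p ^ i * c i r = ∑ i ∈ s, p ^ i * c i r :=
        key _ (fun i h => h r)
      have h3 : ∑ᶠ i, p ^ i * (c i j - c i r) = ∑ i ∈ s, p ^ i * (c i j - c i r) :=
        key _ (fun i h => by rw [h j, h r])
      rw [hexp j, hexp r, h1, h2, h3]
      have hmain : ∑ i ∈ s, p ^ i * (c i j - c i r) + ∑ i ∈ s, p ^ i * c i r
          = ∑ i ∈ s, p ^ i * c i j := by
        rw [← Finset.sum_add_distrib]
        apply Finset.sum_congr rfl
        intro i _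
        have hle : c i r ≤ c i j := (hres i).1.1 hj.le
        rw [← Nat.mul_add, Nat.sub_add_cancel hle]
      omega
    · simp [hj]
end

section
/- Let α and β be partitions with α_{ℓ(α)} ≥ β_1 (so that the concatenation λ = α#β is a partition). Then there is exactly one semistandard λ-tableau of type (α|β): the tableau whose i-th row (for 1 ≤ i ≤ ℓ(α)) is filled entirely with colour c_i, and whose remaining |β| rows (each a single node) are filled with the colours d_1, d_2, … in order, with d_j used β_j times. In particular s^{α#(1^{|β|})}_{(α|β)} = 1. -/
open scoped BigOperators

/-- A filling of the Young diagram of `l` by colours `c_0 < c_1 < ⋯ < d_0 < d_1 < ⋯`,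
encoded as `T : ℕ × ℕ → Bool × ℕ` with `(false, i) = c_i` and `(true, j) = d_j`
(normalised to `(false, 0)` outside the diagram), which is a semistandard
`l`-tableau of type `(a|b)`:
* the `c`-coloured cells form the Young diagram of a partition `μ ⊆ l`,
* on the `c`-cells rows weakly increase and columns strictly increase,
* on the `d`-cells rows strictly increase and columns weakly increase,
* exactly `a i` cells have colour `c_i` and exactly `b j` cells have colour `d_j`. -/
def IsSignedSSYT (l a b : ℕ → ℕ) (T : ℕ × ℕ → Bool × ℕ) : Prop :=
  (∀ i j, l i ≤ j → T (i, j) = (false, 0)) ∧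
  (∀ i j j', j ≤ j' → j' < l i → (T (i, j')).1 = false → (T (i, j)).1 = false) ∧
  (∀ i j, j < l (i + 1) → (T (i + 1, j)).1 = false → (T (i, j)).1 = false) ∧
  (∀ i j, j + 1 < l i →
    ((T (i, j)).1 = false → (T (i, j + 1)).1 = false →
      (T (i, j)).2 ≤ (T (i, j + 1)).2) ∧
    ((T (i, j)).1 = true → (T (i, j + 1)).1 = true →
      (T (i, j)).2 < (T (i, j + 1)).2)) ∧
  (∀ i j, j < l (i + 1) →
    ((T (i, j)).1 = false → (T (i + 1, j)).1 = false →
      (T (i, j)).2 < (T (i + 1, j)).2) ∧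
    ((T (i, j)).1 = true → (T (i + 1, j)).1 = true →
      (T (i, j)).2 ≤ (T (i + 1, j)).2)) ∧
  (∀ k, {x : ℕ × ℕ | x.2 < l x.1 ∧ T x = (false, k)}.ncard = a k) ∧
  (∀ k, {x : ℕ × ℕ | x.2 < l x.1 ∧ T x = (true, k)}.ncard = b k)

/-- `s^λ_{(α|β)}`: the number of semistandard `l`-tableaux of type `(a|b)`. -/
noncomputable def sCount (l a b : ℕ → ℕ) : ℕ :=
  {T : ℕ × ℕ → Bool × ℕ | IsSignedSSYT l a b T}.ncard

noncomputable def pS (b : ℕ → ℕ) (k : ℕ) : ℕ := ∑ j ∈ Finset.range k, b j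

noncomputable def dd (b : ℕ → ℕ) (m : ℕ) : ℕ := sInf {k | m < pS b (k + 1)}

lemma pS_mono (b : ℕ → ℕ) : Monotone (pS b) := fun _ _ h =>
  Finset.sum_le_sum_of_subset (Finset.range_subset_range.2 h)

lemma pS_eq_of_ge (b : ℕ → ℕ) {N : ℕ} (hN : ∀ j, N ≤ j → b j = 0) {k : ℕ} (hk : N ≤ k) :
    pS b k = pS b N := by
  unfold pS
  rw [← Finset.sum_range_add_sum_Ico _ hk]
  have : ∑ j ∈ Finset.Ico N k, b j = 0 :=
    Finset.sum_eq_zero fun j hj => hN j (Finset.mem_Ico.1 hj).1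
  omega

lemma pS_le (b : ℕ → ℕ) {N : ℕ} (hN : ∀ j, N ≤ j → b j = 0) (k : ℕ) : pS b k ≤ pS b N := by
  rcases le_or_gt k N with h | h
  · exact pS_mono b h
  · exact le_of_eq (pS_eq_of_ge b hN h.le)

lemma dd_eq (b : ℕ → ℕ) {k m : ℕ} (h1 : pS b k ≤ m) (h2 : m < pS b (k + 1)) :
    dd b m = k := by
  have hmem : k ∈ {k | m < pS b (k + 1)} := h2
  refine le_antisymm (Nat.sInf_le hmem) (le_csInf ⟨k, hmem⟩ ?_)
  intro j hj
  by_contra hjk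
  push_neg at hjk
  have : pS b (j + 1) ≤ pS b k := pS_mono b hjk
  exact absurd hj (by simp only [Set.mem_setOf_eq]; omega)

lemma dd_spec (b : ℕ → ℕ) {N : ℕ} (hN : ∀ j, N ≤ j → b j = 0) {m : ℕ} (hm : m < pS b N) :
    pS b (dd b m) ≤ m ∧ m < pS b (dd b m + 1) := by
  have hne : {k | m < pS b (k + 1)}.Nonempty :=
    ⟨N, lt_of_lt_of_le hm (pS_mono b (Nat.le_succ N))⟩
  have h2 : m < pS b (dd b m + 1) := Nat.sInf_mem hne
  refine ⟨?_, h2⟩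
  by_contra h
  push_neg at h
  rcases Nat.eq_zero_or_pos (dd b m) with h0 | h0
  · simp [h0, pS] at h
  · have : dd b m - 1 ∈ {k | m < pS b (k + 1)} := by
      simp only [Set.mem_setOf_eq]
      have : dd b m - 1 + 1 = dd b m := by omega
      rw [this]; exact h
    have h3 : dd b m ≤ dd b m - 1 := Nat.sInf_le this
    omega

lemma dd_count (b : ℕ → ℕ) {N : ℕ} (hN : ∀ j, N ≤ j → b j = 0) (k : ℕ) :
    (Finset.filter (fun m => dd b m = k) (Finset.range (pS b N))).card = b k := by
  have : Finset.filter (fun m => dd b m = k) (Finset.range (pS b N))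
      = Finset.Ico (pS b k) (pS b (k + 1)) := by
    ext m
    simp only [Finset.mem_filter, Finset.mem_range, Finset.mem_Ico]
    constructor
    · rintro ⟨hm, rfl⟩
      exact dd_spec b hN hm
    · rintro ⟨h1, h2⟩
      have hle : pS b (k + 1) ≤ pS b N := pS_le b hN (k + 1)
      exact ⟨lt_of_lt_of_le h2 hle, dd_eq b h1 h2⟩
  rw [this, Nat.card_Ico]
  have : pS b (k + 1) = pS b k + b k := Finset.sum_range_succ b k
  omega

/-- A downward-closed finset of naturals is a range. -/
lemma downclosed_eq_range (s : Finset ℕ) (h : ∀ m ∈ s, ∀ x ≤ m, x ∈ s) :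
    s = Finset.range s.card := by
  rcases Finset.eq_empty_or_nonempty s with rfl | hs
  · simp
  · have hmax := Finset.max'_mem s hs
    have h1 : s = Finset.Iic (s.max' hs) := by
      ext x
      simp only [Finset.mem_Iic]
      exact ⟨fun hx => Finset.le_max' s x hx, fun hx => h _ hmax _ hx⟩
    rw [h1, Nat.card_Iic]
    ext x; simp [Nat.lt_succ_iff]

/-- Uniqueness of a weakly increasing sequence with prescribed counts. -/
lemma seq_unique (b : ℕ → ℕ) {N : ℕ} (hN : ∀ j, N ≤ j → b j = 0) (f : ℕ → ℕ)
    (hmono : ∀ m m', m ≤ m' → m' < pS b N → f m ≤ f m')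
    (hcount : ∀ k, (Finset.filter (fun m => f m = k) (Finset.range (pS b N))).card = b k) :
    ∀ m, m < pS b N → f m = dd b m := by
  have key : ∀ k m, m < pS b N → (f m < k ↔ m < pS b k) := by
    intro k
    have hset : Finset.filter (fun m => f m < k) (Finset.range (pS b N))
        = Finset.range (pS b k) := by
      have hdc : ∀ m ∈ Finset.filter (fun m => f m < k) (Finset.range (pS b N)),
          ∀ x ≤ m, x ∈ Finset.filter (fun m => f m < k) (Finset.range (pS b N)) := by
        intro m hm x hx
        simp only [Finset.mem_filter, Finset.mem_range] at hm ⊢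
        exact ⟨lt_of_le_of_lt hx hm.1, lt_of_le_of_lt (hmono x m hx hm.1) hm.2⟩
      have hcard : (Finset.filter (fun m => f m < k) (Finset.range (pS b N))).card = pS b k := by
        have : Finset.filter (fun m => f m < k) (Finset.range (pS b N))
            = (Finset.range k).biUnion
              (fun j => Finset.filter (fun m => f m = j) (Finset.range (pS b N))) := by
          ext m
          simp only [Finset.mem_filter, Finset.mem_range, Finset.mem_biUnion]
          constructor
          · rintro ⟨h1, h2⟩; exact ⟨f m, h2, h1, rfl⟩
          · rintro ⟨j, hj, h1, rfl⟩; exact ⟨h1, hj⟩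
        rw [this, Finset.card_biUnion]
        · simp only [hcount]; rfl
        · intro x hx y hy hxy
          apply Finset.disjoint_filter_filter'
          exact Set.disjoint_left.2 fun m hm1 hm2 => hxy (hm1.symm.trans hm2)
      rw [← hcard]
      exact downclosed_eq_range _ hdc
    intro m hm
    constructor
    · intro hfm
      have : m ∈ Finset.filter (fun m => f m < k) (Finset.range (pS b N)) := by
        simp [hm, hfm]
      rw [hset] at this
      simpa using this
    · intro hmk
      have : m ∈ Finset.range (pS b k) := by simpa using hmk
      rw [← hset] at this
      simp at this
      exact this.2
  intro m hm
  have h1 : pS b (f m) ≤ m := by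
    by_contra h
    push_neg at h
    have := (key (f m) m hm).2 h
    omega
  have h2 : m < pS b (f m + 1) := (key (f m + 1) m hm).1 (Nat.lt_succ_self _)
  exact (dd_eq b h1 h2).symm

lemma dd_mono (b : ℕ → ℕ) {N : ℕ} (hN : ∀ j, N ≤ j → b j = 0) {m m' : ℕ}
    (h : m ≤ m') (h' : m' < pS b N) : dd b m ≤ dd b m' := by
  have s1 := dd_spec b hN (lt_of_le_of_lt h h')
  have s2 := dd_spec b hN h'
  by_contra hc
  push_neg at hc
  have : pS b (dd b m' + 1) ≤ pS b (dd b m) := pS_mono b hc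
  omega

lemma row_set_eq (i n : ℕ) :
    {x : ℕ × ℕ | x.1 = i ∧ x.2 < n} = (fun j => (i, j)) '' Set.Iio n := by
  ext ⟨r, j⟩
  simp only [Set.mem_setOf_eq, Set.mem_image, Set.mem_Iio, Prod.mk.injEq]
  constructor
  · rintro ⟨rfl, h⟩; exact ⟨j, h, rfl, rfl⟩
  · rintro ⟨m, hm, rfl, rfl⟩; exact ⟨rfl, hm⟩

lemma row_fin (i n : ℕ) : {x : ℕ × ℕ | x.1 = i ∧ x.2 < n}.Finite := by
  rw [row_set_eq]; exact (Set.finite_Iio n).image _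

lemma row_ncard (i n : ℕ) : {x : ℕ × ℕ | x.1 = i ∧ x.2 < n}.ncard = n := by
  rw [row_set_eq, Set.ncard_image_of_injective _ (fun x y h => by simpa using h)]
  rw [← Finset.coe_range, Set.ncard_coe_finset, Finset.card_range]

lemma col_inj (La : ℕ) : Function.Injective (fun m => (La + m, 0) : ℕ → ℕ × ℕ) := by
  intro x y h
  simp only [Prod.mk.injEq] at h
  omega


/-- The unique tableau. -/
noncomputable def T0 (b : ℕ → ℕ) (a : ℕ → ℕ) (La B : ℕ) : ℕ × ℕ → Bool × ℕ := fun x =>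
  if x.1 < La ∧ x.2 < a x.1 then (false, x.1)
  else if La ≤ x.1 ∧ x.1 < La + B ∧ x.2 = 0 then (true, dd b (x.1 - La)) else (false, 0)

/-- Let `α, β` be partitions with `α_{ℓ(α)} ≥ β_1`, and let
`λ = α#(1^{|β|})` be the concatenation of `α` with `|β|` parts equal to `1`.
Then there is exactly one semistandard `λ`-tableau of type `(α|β)`: the tableau whose
`i`-th row (for `i < ℓ(α)`) is filled with colour `c_i` and whose remaining `|β|`
single-node rows are filled with `d_0, d_1, …` in weakly increasing order (so `d_j`
is used `β_j` times, forced by the count conditions).  In particular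
`s^{α#(1^{|β|})}_{(α|β)} = 1`. -/
theorem stmt6 (a b : ℕ → ℕ) (La : ℕ)
    (ha : IsPartitionFun a) (hb : IsPartitionFun b)
    (haLa : ∀ i, a i ≠ 0 ↔ i < La)
    (hconc : 0 < La → b 0 ≤ a (La - 1))
    (lam : ℕ → ℕ)
    (hlam : ∀ i, lam i = if i < La then a i else if i < La + ∑ᶠ j, b j then 1 else 0) :
    (∃! T, IsSignedSSYT lam a b T) ∧ sCount lam a b = 1 ∧
      ∀ T, IsSignedSSYT lam a b T →
        (∀ i j, i < La → j < a i → T (i, j) = (false, i)) ∧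
        (∀ i, La ≤ i → i < La + ∑ᶠ j, b j → (T (i, 0)).1 = true) ∧
        (∀ i, La ≤ i → i + 1 < La + ∑ᶠ j, b j → (T (i, 0)).2 ≤ (T (i + 1, 0)).2) := by
  obtain ⟨haA, -⟩ := ha
  obtain ⟨-, N, hN⟩ := hb
  set B := ∑ᶠ j, b j with hBdef
  have hBsum : B = pS b N := by
    rw [hBdef]
    exact finsum_eq_sum_of_support_subset b fun j hj => by
      simp only [Finset.coe_range, Set.mem_Iio]
      by_contra hc
      exact hj (hN j (by omega))
  -- basic facts about lam
  have ha1 : ∀ i, i < La → 1 ≤ a i := fun i h => Nat.one_le_iff_ne_zero.2 ((haLa i).2 h)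
  have hlam1 : ∀ i, i < La → lam i = a i := fun i h => by rw [hlam]; simp [h]
  have hlam2 : ∀ i, La ≤ i → i < La + B → lam i = 1 := fun i h1 h2 => by
    rw [hlam]; rw [if_neg (by omega), if_pos h2]
  have hlam3 : ∀ i, La + B ≤ i → lam i = 0 := fun i h => by
    rw [hlam]; rw [if_neg (by omega), if_neg (by omega)]
  have hlamA : Antitone lam := by
    apply antitone_nat_of_succ_le
    intro i
    have h1 : a (i + 1) ≤ a i := haA (Nat.le_succ i)
    have h2 := ha1 i
    rw [hlam i, hlam (i + 1)]
    split_ifs <;> omega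
  have hfin : {x : ℕ × ℕ | x.2 < lam x.1}.Finite := by
    apply Set.Finite.subset ((Set.finite_Iio (La + B)).prod (Set.finite_Iio (lam 0)))
    rintro ⟨i, j⟩ h
    simp only [Set.mem_setOf_eq] at h
    refine ⟨?_, lt_of_lt_of_le h (hlamA (Nat.zero_le i))⟩
    simp only [Set.mem_Iio]
    by_contra hc
    rw [hlam3 i (by omega)] at h
    omega
  -- characterisation of T0 on the diagram
  have hT0in : ∀ i j, j < lam i →
      (i < La ∧ j < a i ∧ T0 b a La B (i, j) = (false, i)) ∨
      (La ≤ i ∧ i < La + B ∧ j = 0 ∧ T0 b a La B (i, j) = (true, dd b (i - La))) := by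
    intro i j hj
    rcases lt_or_ge i La with h | h
    · left
      have hj' : j < a i := by rwa [hlam1 i h] at hj
      exact ⟨h, hj', by simp [T0, h, hj']⟩
    · right
      have hi2 : i < La + B := by
        by_contra hc
        rw [hlam3 i (by omega)] at hj; omega
      have hj0 : j = 0 := by
        rw [hlam2 i h hi2] at hj; omega
      refine ⟨h, hi2, hj0, ?_⟩
      simp only [T0, hj0]
      rw [if_neg (by omega), if_pos ⟨h, hi2, trivial⟩]
  have hT0out : ∀ i j, lam i ≤ j → T0 b a La B (i, j) = (false, 0) := by
    intro i j hj
    simp only [T0]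
    rcases lt_or_ge i La with h | h
    · rw [hlam1 i h] at hj
      rw [if_neg (by omega), if_neg (by omega)]
    · rcases lt_or_ge i (La + B) with h2 | h2
      · rw [hlam2 i h h2] at hj
        rw [if_neg (by omega), if_neg (by omega)]
      · rw [if_neg (by omega), if_neg (by omega)]
  -- existence
  have hT0 : IsSignedSSYT lam a b (T0 b a La B) := by
    refine ⟨hT0out, ?_, ?_, ?_, ?_, ?_, ?_⟩
    · -- row initial segment
      intro i j j' hjj' hj' hf
      rcases hT0in i j' hj' with ⟨h1, h2, h3⟩ | ⟨h1, h2, h3, h4⟩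
      · rcases hT0in i j (lt_of_le_of_lt hjj' hj') with ⟨_, _, h3'⟩ | ⟨hc, _, _, _⟩
        · rw [h3']
        · omega
      · rw [h4] at hf; simp at hf
    · -- column initial segment
      intro i j hj hf
      rcases hT0in i j (lt_of_lt_of_le hj (hlamA (Nat.le_succ i))) with
        ⟨h1, h2, h3⟩ | ⟨h1, h2, h3, h4⟩
      · rw [h3]
      · rcases hT0in (i + 1) j hj with ⟨hc, _, _⟩ | ⟨_, _, _, h4'⟩
        · omega
        · rw [h4'] at hf; simp at hf
    · -- rows
      intro i j hj
      have hj1 : j < lam i := by omega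
      rcases hT0in i (j + 1) hj with ⟨h1, h2, h3⟩ | ⟨h1, h2, h3, h4⟩
      · rcases hT0in i j hj1 with ⟨_, _, h3'⟩ | ⟨hc, _, _, _⟩
        · rw [h3, h3']; simp
        · omega
      · omega
    · -- columns
      intro i j hj
      have hj1 : j < lam i := lt_of_lt_of_le hj (hlamA (Nat.le_succ i))
      rcases hT0in (i + 1) j hj with ⟨h1, h2, h3⟩ | ⟨h1, h2, h3, h4⟩
      · rcases hT0in i j hj1 with ⟨_, _, h3'⟩ | ⟨hc, _, _, _⟩
        · rw [h3, h3']; simp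
        · omega
      · rcases hT0in i j hj1 with ⟨_, _, h3'⟩ | ⟨h1', h2', h3', h4'⟩
        · rw [h3', h4]; simp
        · rw [h4, h4']
          simp only
          constructor
          · intro h; simp at h
          · intro _ _
            apply dd_mono b hN (by omega)
            rw [← hBsum]; omega
    · -- false counts
      intro k
      have : {x : ℕ × ℕ | x.2 < lam x.1 ∧ T0 b a La B x = (false, k)}
          = {x : ℕ × ℕ | x.1 = k ∧ x.2 < a k} := by
        ext ⟨r, j⟩
        simp only [Set.mem_setOf_eq]
        constructor
        · rintro ⟨hd, hT⟩
          rcases hT0in r j hd with ⟨h1, h2, h3⟩ | ⟨h1, h2, h3, h4⟩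
          · rw [h3] at hT
            have : r = k := by simpa using hT
            exact ⟨this, this ▸ h2⟩
          · rw [h4] at hT; simp at hT
        · rintro ⟨rfl, hj⟩
          have hr : r < La := (haLa r).1 (by omega)
          have hd : j < lam r := by rw [hlam1 r hr]; omega
          rcases hT0in r j hd with ⟨_, _, h3⟩ | ⟨hc, _, _, _⟩
          · exact ⟨hd, h3⟩
          · omega
      rw [this, row_ncard]
    · -- true counts
      intro k
      have : {x : ℕ × ℕ | x.2 < lam x.1 ∧ T0 b a La B x = (true, k)}
          = (fun m => (La + m, 0)) '' {m : ℕ | m < B ∧ dd b m = k} := by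
        ext ⟨r, j⟩
        simp only [Set.mem_setOf_eq, Set.mem_image, Prod.mk.injEq]
        constructor
        · rintro ⟨hd, hT⟩
          rcases hT0in r j hd with ⟨h1, h2, h3⟩ | ⟨h1, h2, h3, h4⟩
          · rw [h3] at hT; simp at hT
          · rw [h4] at hT
            refine ⟨r - La, ⟨by omega, ?_⟩, by omega, h3.symm⟩
            simpa using hT
        · rintro ⟨m, ⟨hm, rfl⟩, rfl, rfl⟩
          have hd : (0 : ℕ) < lam (La + m) := by
            rw [hlam2 (La + m) (by omega) (by omega)]; omega
          rcases hT0in (La + m) 0 hd with ⟨hc, _, _⟩ | ⟨_, _, _, h4⟩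
          · omega
          · refine ⟨hd, ?_⟩
            have hmm : La + m - La = m := by omega
            rw [h4, hmm]
      rw [this, Set.ncard_image_of_injective _ (col_inj La)]
      have : {m : ℕ | m < B ∧ dd b m = k}
          = ↑(Finset.filter (fun m => dd b m = k) (Finset.range (pS b N))) := by
        ext m; simp [hBsum]
      rw [this, Set.ncard_coe_finset, dd_count b hN]
  -- uniqueness / structure
  have main : ∀ T, IsSignedSSYT lam a b T →
      ((∀ i j, i < La → j < a i → T (i, j) = (false, i)) ∧
       (∀ i, La ≤ i → i < La + B → (T (i, 0)).1 = true) ∧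
       (∀ i, La ≤ i → i + 1 < La + B → (T (i, 0)).2 ≤ (T (i + 1, 0)).2)) ∧
      T = T0 b a La B := by
    intro T hT
    obtain ⟨h0, h2, h3, h4, h5, hca, hcb⟩ := hT
    -- false cells have value ≥ row index
    have hvalge : ∀ i j, j < lam i → (T (i, j)).1 = false → i ≤ (T (i, j)).2 := by
      intro i
      induction i with
      | zero => intro j _ _; exact Nat.zero_le _
      | succ i ih =>
        intro j hj hf
        have hj' : j < lam i := lt_of_lt_of_le hj (hlamA (Nat.le_succ i))
        have hf' : (T (i, j)).1 = false := h3 i j hj hf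
        have hlt := (h5 i j hj).1 hf' hf
        have := ih j hj' hf'
        omega
    -- rows below La are fully determined
    have hrows : ∀ i, i < La → ∀ j, j < a i → T (i, j) = (false, i) := by
      intro i
      induction i using Nat.strong_induction_on with
      | _ i ih =>
        intro hiLa j hj
        have hsub : {x : ℕ × ℕ | x.2 < lam x.1 ∧ T x = (false, i)}
            ⊆ {x : ℕ × ℕ | x.1 = i ∧ x.2 < a i} := by
          rintro ⟨r, j'⟩ ⟨hd, hTx⟩
          have hfalse : (T (r, j')).1 = false := by rw [hTx]
          have hvr : (T (r, j')).2 = i := by rw [hTx]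
          have hri : r ≤ i := by
            have := hvalge r j' hd hfalse; omega
          have hreq : r = i := by
            by_contra hc
            have hr : r < i := by omega
            have hr' : j' < a r := by rwa [hlam1 r (by omega)] at hd
            have := ih r hr (by omega) j' hr'
            rw [this] at hvr
            simp at hvr
            omega
          subst hreq
          exact ⟨rfl, by rwa [hlam1 r hiLa] at hd⟩
        have heq : {x : ℕ × ℕ | x.2 < lam x.1 ∧ T x = (false, i)}
            = {x : ℕ × ℕ | x.1 = i ∧ x.2 < a i} :=
          Set.eq_of_subset_of_ncard_le hsub
            (by rw [hca i, row_ncard]) (row_fin i (a i))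
        have : ((i, j) : ℕ × ℕ) ∈ {x : ℕ × ℕ | x.2 < lam x.1 ∧ T x = (false, i)} := by
          rw [heq]; exact ⟨rfl, hj⟩
        exact this.2
    -- cells in the tail rows are true
    have hdcells : ∀ i, La ≤ i → i < La + B → (T (i, 0)).1 = true := by
      intro i hi1 hi2
      by_contra hc
      have hf : (T (i, 0)).1 = false := by
        cases h : (T (i, 0)).1
        · rfl
        · exact absurd h hc
      have hd : (0 : ℕ) < lam i := by rw [hlam2 i hi1 hi2]; omega
      have hge : i ≤ (T (i, 0)).2 := hvalge i 0 hd hf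
      set v := (T (i, 0)).2 with hv
      have hav : a v = 0 := by
        by_contra hc2
        have := (haLa v).1 hc2
        omega
      have hmem : ((i, 0) : ℕ × ℕ) ∈ {x : ℕ × ℕ | x.2 < lam x.1 ∧ T x = (false, v)} := by
        refine ⟨hd, ?_⟩
        have := Prod.mk.eta (p := T (i, 0))
        rw [← this, hf]
      have hpos : 0 < {x : ℕ × ℕ | x.2 < lam x.1 ∧ T x = (false, v)}.ncard := by
        rw [Set.ncard_pos (hfin.subset (fun x hx => hx.1))]
        exact ⟨_, hmem⟩
      rw [hca v, hav] at hpos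
      omega
    -- weak increase of tail values
    have hstep : ∀ i, La ≤ i → i + 1 < La + B → (T (i, 0)).2 ≤ (T (i + 1, 0)).2 := by
      intro i hi1 hi2
      have hd : (0 : ℕ) < lam (i + 1) := by rw [hlam2 (i + 1) (by omega) hi2]; omega
      exact (h5 i 0 hd).2 (hdcells i hi1 (by omega)) (hdcells (i + 1) (by omega) hi2)
    refine ⟨⟨fun i j h1 h2 => hrows i h1 j h2, hdcells, hstep⟩, ?_⟩
    -- identify values in the tail
    have hmono : ∀ m m', m ≤ m' → m' < pS b N →
        (T (La + m, 0)).2 ≤ (T (La + m', 0)).2 := by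
      intro m m' hmm' hm'
      rw [← hBsum] at hm'
      induction m' with
      | zero => interval_cases m; exact le_refl _
      | succ m' ih =>
        rcases Nat.lt_or_ge m (m' + 1) with h | h
        · have h1 := ih (by omega) (by omega)
          have h2 := hstep (La + m') (by omega) (by omega)
          have : La + m' + 1 = La + (m' + 1) := by omega
          rw [this] at h2
          omega
        · have : m = m' + 1 := by omega
          subst this; exact le_refl _
    have hcount : ∀ k, (Finset.filter (fun m => (T (La + m, 0)).2 = k)
        (Finset.range (pS b N))).card = b k := by
      intro k
      have hseteq : {x : ℕ × ℕ | x.2 < lam x.1 ∧ T x = (true, k)}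
          = (fun m => (La + m, 0)) '' {m : ℕ | m < B ∧ (T (La + m, 0)).2 = k} := by
        ext ⟨r, j⟩
        simp only [Set.mem_setOf_eq, Set.mem_image, Prod.mk.injEq]
        constructor
        · rintro ⟨hd, hTx⟩
          have htrue : (T (r, j)).1 = true := by rw [hTx]
          have hge : La ≤ r := by
            by_contra hc
            push_neg at hc
            have : j < a r := by rwa [hlam1 r hc] at hd
            rw [hrows r hc j this] at htrue
            simp at htrue
          have hlt : r < La + B := by
            by_contra hc
            rw [hlam3 r (by omega)] at hd; omega
          have hj0 : j = 0 := by rw [hlam2 r hge hlt] at hd; omega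
          subst hj0
          refine ⟨r - La, ⟨by omega, ?_⟩, by omega, rfl⟩
          have : La + (r - La) = r := by omega
          rw [this, hTx]
        · rintro ⟨m, ⟨hm, hval⟩, rfl, rfl⟩
          have hd : (0 : ℕ) < lam (La + m) := by
            rw [hlam2 (La + m) (by omega) (by omega)]; omega
          refine ⟨hd, ?_⟩
          have h1 := hdcells (La + m) (by omega) (by omega)
          have := Prod.mk.eta (p := T (La + m, 0))
          rw [← this, h1, hval]
      have h1 := hcb k
      rw [hseteq, Set.ncard_image_of_injective _ (col_inj La)] at h1
      have h2 : {m : ℕ | m < B ∧ (T (La + m, 0)).2 = k}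
          = ↑(Finset.filter (fun m => (T (La + m, 0)).2 = k) (Finset.range (pS b N))) := by
        ext m; simp [hBsum]
      rw [h2, Set.ncard_coe_finset] at h1
      exact h1
    have hvals : ∀ m, m < B → (T (La + m, 0)).2 = dd b m := by
      intro m hm
      rw [hBsum] at hm
      exact seq_unique b hN _ hmono hcount m hm
    -- final extensionality
    funext x
    obtain ⟨r, j⟩ := x
    rcases lt_or_ge j (lam r) with hd | hd
    · rcases hT0in r j hd with ⟨h1', h2', h3'⟩ | ⟨h1', h2', h3', h4'⟩
      · rw [h3', hrows r h1' j h2']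
      · subst h3'
        rw [h4']
        have ht := hdcells r h1' h2'
        have hv := hvals (r - La) (by omega)
        have hLa : La + (r - La) = r := by omega
        rw [hLa] at hv
        have := Prod.mk.eta (p := T (r, 0))
        rw [← this, ht, hv]
    · rw [h0 r j hd, hT0out r j hd]
  refine ⟨⟨T0 b a La B, hT0, fun T hT => (main T hT).2⟩, ?_, fun T hT => (main T hT).1⟩
  have : {T : ℕ × ℕ → Bool × ℕ | IsSignedSSYT lam a b T} = {T0 b a La B} := by
    ext T
    simp only [Set.mem_setOf_eq, Set.mem_singleton_iff]
    exact ⟨fun h => (main T h).2, fun h => h ▸ hT0⟩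
  rw [sCount, this, Set.ncard_singleton]
end

section
/- Let ρ, ν be partitions with no parts equal to 1 (all parts ≥ 2). Suppose that for every partition λ of n, the number of semistandard λ-tableaux of type (ρ|γ) equals the number of semistandard λ-tableaux of type (ν|δ), where γ, δ are partitions with |ρ|+|γ| = n = |ν|+|δ|. Then ρ = ν. -/
open scoped BigOperators

namespace Stmt7Aux

open Finset

lemma diagram_finite (l : ℕ → ℕ) (hl : IsPartitionFun l) :
    {x : ℕ × ℕ | x.2 < l x.1}.Finite := by
  obtain ⟨N, hN⟩ := hl.2
  apply Set.Finite.subset ((Set.finite_Iio N).prod (Set.finite_Iio (l 0)))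
  rintro ⟨i, j⟩ hx
  simp only [Set.mem_setOf_eq] at hx
  constructor
  · simp only [Set.mem_Iio]
    by_contra hc
    push_neg at hc
    rw [hN i hc] at hx
    omega
  · exact lt_of_lt_of_le hx (hl.1 (Nat.zero_le i))

lemma row_le_colour {l a b : ℕ → ℕ} {T : ℕ × ℕ → Bool × ℕ}
    (hl : IsPartitionFun l) (hT : IsSignedSSYT l a b T) :
    ∀ i j, j < l i → (T (i, j)).1 = false → i ≤ (T (i, j)).2 := by
  intro i
  induction i with
  | zero => intro j _ _; exact Nat.zero_le _
  | succ i ih =>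
    intro j hj hf
    have h3 := hT.2.2.1 i j hj hf
    have h5 := (hT.2.2.2.2.1 i j hj).1 h3 hf
    have hji : j < l i := lt_of_lt_of_le hj (hl.1 (Nat.le_succ i))
    have := ih j hji h3
    omega

lemma partial_sum_le {l a b : ℕ → ℕ} {T : ℕ × ℕ → Bool × ℕ}
    (hl : IsPartitionFun l) (hT : IsSignedSSYT l a b T) (m : ℕ) :
    ∑ k ∈ range m, a k ≤ ∑ i ∈ range m, l i := by
  classical
  have hdf := diagram_finite l hl
  have hC : ∀ k, {x : ℕ × ℕ | x.2 < l x.1 ∧ T x = (false, k)}.Finite :=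
    fun k => hdf.subset (fun x hx => hx.1)
  have hcard : ∀ k, ((hC k).toFinset).card = a k := by
    intro k
    rw [← Set.ncard_eq_toFinset_card _ (hC k)]
    exact hT.2.2.2.2.2.1 k
  have hdisj : ∀ k ∈ range m, ∀ k' ∈ range m, k ≠ k' →
      Disjoint ((hC k).toFinset) ((hC k').toFinset) := by
    intro k _ k' _ hkk'
    rw [Finset.disjoint_left]
    intro x hx hx'
    rw [Set.Finite.mem_toFinset] at hx hx'
    apply hkk'
    have h2 := hx.2.symm.trans hx'.2
    exact (Prod.ext_iff.1 h2).2
  have hsub : (range m).biUnion (fun k => (hC k).toFinset) ⊆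
      (range m).biUnion (fun i => ({i} : Finset ℕ) ×ˢ range (l i)) := by
    intro x hx
    rw [Finset.mem_biUnion] at hx
    obtain ⟨k, hk, hxk⟩ := hx
    rw [Set.Finite.mem_toFinset] at hxk
    obtain ⟨i, j⟩ := x
    have hf : (T (i, j)).1 = false := by rw [hxk.2]
    have h1 : i ≤ (T (i, j)).2 := row_le_colour hl hT i j hxk.1 hf
    have h2 : (T (i, j)).2 = k := by rw [hxk.2]
    rw [Finset.mem_biUnion]
    refine ⟨i, ?_, ?_⟩
    · rw [Finset.mem_range] at hk ⊢; omega
    · simp only [Finset.mem_product, Finset.mem_singleton, Finset.mem_range]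
      exact ⟨trivial, hxk.1⟩
  calc ∑ k ∈ range m, a k
      = ∑ k ∈ range m, ((hC k).toFinset).card := by
        exact (Finset.sum_congr rfl fun k _ => hcard k).symm
    _ = ((range m).biUnion (fun k => (hC k).toFinset)).card :=
        (Finset.card_biUnion hdisj).symm
    _ ≤ ((range m).biUnion (fun i => ({i} : Finset ℕ) ×ˢ range (l i))).card :=
        Finset.card_le_card hsub
    _ ≤ ∑ i ∈ range m, (({i} : Finset ℕ) ×ˢ range (l i)).card :=
        Finset.card_biUnion_le
    _ = ∑ i ∈ range m, l i := by
        refine Finset.sum_congr rfl fun i _ => ?_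
        simp [Finset.card_product]

lemma total_le {l a b : ℕ → ℕ} {T : ℕ × ℕ → Bool × ℕ}
    (hl : IsPartitionFun l) (hT : IsSignedSSYT l a b T) (Kr Kv : ℕ)
    (hlK : ∀ i, Kr ≤ i → l i ≤ 1) :
    ∑ k ∈ range Kv, a k ≤ (∑ i ∈ range Kr, l i) + (Kv - Kr) := by
  classical
  have hdf := diagram_finite l hl
  have hC : ∀ k, {x : ℕ × ℕ | x.2 < l x.1 ∧ T x = (false, k)}.Finite :=
    fun k => hdf.subset (fun x hx => hx.1)
  have hcard : ∀ k, ((hC k).toFinset).card = a k := by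
    intro k
    rw [← Set.ncard_eq_toFinset_card _ (hC k)]
    exact hT.2.2.2.2.2.1 k
  have hdisj : ∀ k ∈ range Kv, ∀ k' ∈ range Kv, k ≠ k' →
      Disjoint ((hC k).toFinset) ((hC k').toFinset) := by
    intro k _ k' _ hkk'
    rw [Finset.disjoint_left]
    intro x hx hx'
    rw [Set.Finite.mem_toFinset] at hx hx'
    exact hkk' (Prod.ext_iff.1 (hx.2.symm.trans hx'.2)).2
  set Dfin := (range Kr).biUnion (fun i => ({i} : Finset ℕ) ×ˢ range (l i)) with hD
  set Efin := (Finset.Ico Kr Kv).image (fun i => ((i, 0) : ℕ × ℕ)) with hE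
  have hsub : (range Kv).biUnion (fun k => (hC k).toFinset) ⊆ Dfin ∪ Efin := by
    intro x hx
    rw [Finset.mem_biUnion] at hx
    obtain ⟨k, hk, hxk⟩ := hx
    rw [Set.Finite.mem_toFinset] at hxk
    obtain ⟨i, j⟩ := x
    have hf : (T (i, j)).1 = false := by rw [hxk.2]
    have h1 : i ≤ (T (i, j)).2 := row_le_colour hl hT i j hxk.1 hf
    have h2 : (T (i, j)).2 = k := by rw [hxk.2]
    rw [Finset.mem_range] at hk
    rw [Finset.mem_union]
    by_cases hi : i < Kr
    · left
      rw [Finset.mem_biUnion]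
      refine ⟨i, Finset.mem_range.2 hi, ?_⟩
      simp only [Finset.mem_product, Finset.mem_singleton, Finset.mem_range]
      exact ⟨trivial, hxk.1⟩
    · right
      push_neg at hi
      have hj : j = 0 := by have := hlK i hi; have h4 : j < l i := hxk.1; omega
      rw [Finset.mem_image]
      exact ⟨i, Finset.mem_Ico.2 ⟨hi, by omega⟩, by rw [hj]⟩
  calc ∑ k ∈ range Kv, a k
      = ((range Kv).biUnion (fun k => (hC k).toFinset)).card := by
        rw [Finset.card_biUnion hdisj]
        exact (Finset.sum_congr rfl fun k _ => hcard k).symm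
    _ ≤ (Dfin ∪ Efin).card := Finset.card_le_card hsub
    _ ≤ Dfin.card + Efin.card := Finset.card_union_le _ _
    _ ≤ (∑ i ∈ range Kr, l i) + (Kv - Kr) := by
        gcongr
        · calc Dfin.card ≤ ∑ i ∈ range Kr, (({i} : Finset ℕ) ×ˢ range (l i)).card :=
                Finset.card_biUnion_le
            _ = ∑ i ∈ range Kr, l i := by
                refine Finset.sum_congr rfl fun i _ => ?_
                simp [Finset.card_product]
        · calc Efin.card ≤ (Finset.Ico Kr Kv).card := Finset.card_image_le
            _ = Kv - Kr := Nat.card_Ico _ _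

lemma ssyt_finite (l a b : ℕ → ℕ) (hl : IsPartitionFun l)
    (ha : ∃ N, ∀ i, N ≤ i → a i = 0) (hb : ∃ N, ∀ i, N ≤ i → b i = 0) :
    {T : ℕ × ℕ → Bool × ℕ | IsSignedSSYT l a b T}.Finite := by
  classical
  obtain ⟨Na, hNa⟩ := ha
  obtain ⟨Nb, hNb⟩ := hb
  set M := max Na Nb + 1 with hM
  have hdf := diagram_finite l hl
  set E := hdf.toFinset with hEdef
  have hval : ∀ T ∈ {T : ℕ × ℕ → Bool × ℕ | IsSignedSSYT l a b T}, ∀ x : ℕ × ℕ,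
      (T x).2 < M := by
    intro T hT x
    by_cases hx : x.2 < l x.1
    · rcases Bool.eq_false_or_eq_true (T x).1 with hc | hc
      · set k := (T x).2 with hk
        have hmem : x ∈ {y : ℕ × ℕ | y.2 < l y.1 ∧ T y = (true, k)} := by
          exact ⟨hx, Prod.ext hc rfl⟩
        have hfin : {y : ℕ × ℕ | y.2 < l y.1 ∧ T y = (true, k)}.Finite :=
          hdf.subset (fun y hy => hy.1)
        have hpos : 0 < b k := by
          rw [← hT.2.2.2.2.2.2 k]
          exact (Set.ncard_pos hfin).2 ⟨x, hmem⟩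
        have : k < Nb := by
          by_contra hcon
          push_neg at hcon
          rw [hNb k hcon] at hpos
          omega
        omega
      · set k := (T x).2 with hk
        have hmem : x ∈ {y : ℕ × ℕ | y.2 < l y.1 ∧ T y = (false, k)} := by
          exact ⟨hx, Prod.ext hc rfl⟩
        have hfin : {y : ℕ × ℕ | y.2 < l y.1 ∧ T y = (false, k)}.Finite :=
          hdf.subset (fun y hy => hy.1)
        have hpos : 0 < a k := by
          rw [← hT.2.2.2.2.2.1 k]
          exact (Set.ncard_pos hfin).2 ⟨x, hmem⟩
        have : k < Na := by
          by_contra hcon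
          push_neg at hcon
          rw [hNa k hcon] at hpos
          omega
        omega
    · push_neg at hx
      have := hT.1 x.1 x.2 hx
      have hx2 : T x = (false, 0) := this
      rw [hx2]
      omega
  apply Set.Finite.of_finite_image (f := fun (T : ℕ × ℕ → Bool × ℕ) (y : ↑E) => T ↑y)
  · apply Set.Finite.subset (Set.Finite.pi' (t := fun _ : ↑E => (Set.univ : Set Bool) ×ˢ Set.Iio M)
      (fun _ => Set.Finite.prod (Set.finite_univ) (Set.finite_Iio M)))
    rintro f ⟨T, hT, rfl⟩
    intro y
    exact ⟨trivial, hval T hT ↑y⟩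
  · intro T hT T' hT' heq
    funext x
    by_cases hx : x.2 < l x.1
    · have hxE : x ∈ E := by rw [hEdef, Set.Finite.mem_toFinset]; exact hx
      exact congrFun heq ⟨x, hxE⟩
    · push_neg at hx
      have e1 : T x = (false, 0) := hT.1 x.1 x.2 hx
      have e2 : T' x = (false, 0) := hT'.1 x.1 x.2 hx
      rw [e1, e2]

/-! ### partial sums and the index function -/

def psum (g : ℕ → ℕ) (k : ℕ) : ℕ := ∑ i ∈ range k, g i

lemma psum_mono (g : ℕ → ℕ) : Monotone (psum g) := by
  intro k k' hk
  exact Finset.sum_le_sum_of_subset (Finset.range_subset_range.2 hk)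

lemma psum_succ (g : ℕ → ℕ) (k : ℕ) : psum g (k + 1) = psum g k + g k :=
  Finset.sum_range_succ g k

lemma psum_stable (g : ℕ → ℕ) (N : ℕ) (hN : ∀ i, N ≤ i → g i = 0) (k : ℕ)
    (hk : N ≤ k) : psum g k = psum g N := by
  induction k with
  | zero =>
    obtain rfl : N = 0 := by omega
    rfl
  | succ k ih =>
    rcases Nat.lt_or_ge N (k+1) with hlt | hge
    · rw [psum_succ, hN k (by omega), ih (by omega), Nat.add_zero]
    · have hNk : N = k + 1 := by omega
      rw [hNk]

lemma psum_le_total (g : ℕ → ℕ) (N : ℕ) (hN : ∀ i, N ≤ i → g i = 0) (k : ℕ) :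
    psum g k ≤ psum g N := by
  rcases Nat.le_total k N with hk | hk
  · exact psum_mono g hk
  · rw [psum_stable g N hN k hk]

noncomputable def gIdx (g : ℕ → ℕ) (p : ℕ) : ℕ := sInf {k | p < psum g (k + 1)}

lemma gIdx_spec (g : ℕ → ℕ) (N : ℕ) (hN : ∀ i, N ≤ i → g i = 0) (p : ℕ)
    (hp : p < psum g N) : psum g (gIdx g p) ≤ p ∧ p < psum g (gIdx g p + 1) := by
  have hne : {k | p < psum g (k + 1)}.Nonempty := by
    refine ⟨N, ?_⟩
    have : psum g N ≤ psum g (N + 1) := psum_mono g (Nat.le_succ N)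
    simp only [Set.mem_setOf_eq]
    omega
  have hmem := Nat.sInf_mem hne
  constructor
  · rcases Nat.eq_zero_or_pos (gIdx g p) with h0 | h0
    · rw [h0]; exact Nat.zero_le p
    · have hnot : gIdx g p - 1 ∉ {k | p < psum g (k + 1)} :=
        Nat.notMem_of_lt_sInf (Nat.sub_lt h0 one_pos)
      simp only [Set.mem_setOf_eq, not_lt] at hnot
      have : gIdx g p - 1 + 1 = gIdx g p := by omega
      rwa [this] at hnot
  · exact hmem

lemma gIdx_eq_iff (g : ℕ → ℕ) (N : ℕ) (hN : ∀ i, N ≤ i → g i = 0) (p k : ℕ)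
    (hp : p < psum g N) :
    gIdx g p = k ↔ psum g k ≤ p ∧ p < psum g (k + 1) := by
  obtain ⟨h1, h2⟩ := gIdx_spec g N hN p hp
  constructor
  · rintro rfl; exact ⟨h1, h2⟩
  · rintro ⟨h3, h4⟩
    by_contra hne
    rcases Nat.lt_or_ge (gIdx g p) k with hlt | hge
    · have : psum g (gIdx g p + 1) ≤ psum g k := psum_mono g (by omega)
      omega
    · have : psum g (k + 1) ≤ psum g (gIdx g p) := psum_mono g (by omega)
      omega

lemma gIdx_mono (g : ℕ → ℕ) (N : ℕ) (hN : ∀ i, N ≤ i → g i = 0) (p p' : ℕ)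
    (hpp : p ≤ p') (hp' : p' < psum g N) : gIdx g p ≤ gIdx g p' := by
  obtain ⟨h1, h2⟩ := gIdx_spec g N hN p (by omega)
  obtain ⟨h3, h4⟩ := gIdx_spec g N hN p' hp'
  by_contra hcon
  push_neg at hcon
  have : psum g (gIdx g p' + 1) ≤ psum g (gIdx g p) := psum_mono g (by omega)
  omega

/-! ### the padded partition and the canonical tableau -/

def padded (r : ℕ → ℕ) (K m : ℕ) : ℕ → ℕ := fun i =>
  if i < K then r i else if i < K + m then 1 else 0

noncomputable def canonT (r g : ℕ → ℕ) (K m : ℕ) : ℕ × ℕ → Bool × ℕ := fun x =>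
  if x.2 < padded r K m x.1 then
    (if x.1 < K then (false, x.1) else (true, gIdx g (x.1 - K)))
  else (false, 0)

lemma padded_partition (r : ℕ → ℕ) (K m : ℕ) (hr : Antitone r)
    (hrK : ∀ i, r i = 0 ↔ K ≤ i) : IsPartitionFun (padded r K m) := by
  constructor
  · intro i j hij
    unfold padded
    by_cases hi : i < K
    · by_cases hj : j < K
      · rw [if_pos hi, if_pos hj]
        exact hr hij
      · have h1 : 1 ≤ r i := by
          by_contra hc
          push_neg at hc
          have h2 : r i = 0 := by omega
          have := (hrK i).1 h2
          omega
        rw [if_pos hi, if_neg hj]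
        split <;> omega
    · have hj : ¬ j < K := by omega
      rw [if_neg hi, if_neg hj]
      split <;> split <;> omega
  · refine ⟨K + m, fun i hi => ?_⟩
    unfold padded
    split <;> [omega; (split <;> omega)]

lemma padded_sum (r : ℕ → ℕ) (K m : ℕ) (hrK : ∀ i, r i = 0 ↔ K ≤ i) (m' : ℕ)
    (hm' : m' ≤ K) : ∑ i ∈ range m', padded r K m i = ∑ i ∈ range m', r i := by
  refine Finset.sum_congr rfl fun i hi => ?_
  rw [Finset.mem_range] at hi
  unfold padded
  rw [if_pos (by omega)]

lemma padded_total (r : ℕ → ℕ) (K m : ℕ) (hrK : ∀ i, r i = 0 ↔ K ≤ i) :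
    ∑ i ∈ range (K + m), padded r K m i = (∑ i ∈ range K, r i) + m := by
  rw [Finset.range_eq_Ico, ← Finset.sum_Ico_consecutive _ (Nat.zero_le K) (Nat.le_add_right K m)]
  congr 1
  · rw [← Finset.range_eq_Ico]
    exact padded_sum r K m hrK K le_rfl
  · have : ∀ i ∈ Finset.Ico K (K + m), padded r K m i = 1 := by
      intro i hi
      rw [Finset.mem_Ico] at hi
      unfold padded
      rw [if_neg (by omega), if_pos (by omega)]
    rw [Finset.sum_congr rfl this]
    simp [Nat.card_Ico]

lemma canon_mem (r g : ℕ → ℕ) (K Ng : ℕ) (hr : Antitone r)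
    (hrK : ∀ i, r i = 0 ↔ K ≤ i) (hNg : ∀ i, Ng ≤ i → g i = 0) :
    IsSignedSSYT (padded r K (psum g Ng)) r g (canonT r g K (psum g Ng)) := by
  set m := psum g Ng with hm
  set l := padded r K m with hldef
  set T := canonT r g K m with hTdef
  have hlr : ∀ i, i < K → l i = r i := by
    intro i hi; rw [hldef]; unfold padded; rw [if_pos hi]
  have hl1 : ∀ i, K ≤ i → i < K + m → l i = 1 := by
    intro i h1 h2; rw [hldef]; unfold padded; rw [if_neg (by omega), if_pos h2]
  have hl0 : ∀ i, K + m ≤ i → l i = 0 := by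
    intro i h1; rw [hldef]; unfold padded; rw [if_neg (by omega), if_neg (by omega)]
  have hlle : ∀ i, K ≤ i → l i ≤ 1 := by
    intro i h1
    rcases Nat.lt_or_ge i (K + m) with h2 | h2
    · rw [hl1 i h1 h2]
    · rw [hl0 i h2]; omega
  have hTin : ∀ i j, j < l i →
      T (i, j) = if i < K then ((false, i) : Bool × ℕ) else (true, gIdx g (i - K)) := by
    intro i j hj
    rw [hTdef]
    unfold canonT
    rw [if_pos hj]
  have hTout : ∀ i j, l i ≤ j → T (i, j) = (false, 0) := by
    intro i j hj
    rw [hTdef]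
    unfold canonT
    rw [if_neg (show ¬ (j < padded r K m i) from by
      have hpl : padded r K m i = l i := rfl
      omega)]
  have hTlow : ∀ i j, j < l i → i < K → T (i, j) = (false, i) := by
    intro i j hj hi
    rw [hTin i j hj, if_pos hi]
  have hThigh : ∀ i j, j < l i → K ≤ i → T (i, j) = (true, gIdx g (i - K)) := by
    intro i j hj hi
    rw [hTin i j hj, if_neg (by omega)]
  have hdig : ∀ i j, j < l i → K ≤ i → j = 0 ∧ i < K + m := by
    intro i j hj hi
    have h2 : i < K + m := by
      by_contra hc
      push_neg at hc
      rw [hl0 i hc] at hj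
      omega
    have := hl1 i hi h2
    omega
  have hanti : Antitone l := (padded_partition r K m hr hrK).1
  refine ⟨hTout, ?_, ?_, ?_, ?_, ?_, ?_⟩
  · -- rows: false cells left-justified
    intro i j j' hjj hj' hf
    have hj : j < l i := by omega
    by_cases hi : i < K
    · rw [hTlow i j hj hi]
    · exfalso
      rw [hThigh i j' hj' (by omega)] at hf
      simp at hf
  · -- columns: false cells top-justified
    intro i j hj hf
    have hi1 : i + 1 < K := by
      by_contra hc
      push_neg at hc
      rw [hThigh (i+1) j hj hc] at hf
      simp at hf
    have hj2 : j < l i := lt_of_lt_of_le hj (hanti (Nat.le_succ i))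
    rw [hTlow i j hj2 (by omega)]
  · -- row conditions
    intro i j hj
    constructor
    · intro hf _
      have hiK : i < K := by
        by_contra hc
        push_neg at hc
        rw [hThigh i j (by omega) hc] at hf
        simp at hf
      rw [hTlow i j (by omega) hiK, hTlow i (j+1) hj hiK]
    · intro ht _
      exfalso
      have hiK : K ≤ i := by
        by_contra hc
        push_neg at hc
        rw [hTlow i j (by omega) hc] at ht
        simp at ht
      have := hlle i hiK
      omega
  · -- column conditions
    intro i j hj
    have hj2 : j < l i := lt_of_lt_of_le hj (hanti (Nat.le_succ i))
    constructor
    · intro hf hf1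
      have hiK : i + 1 < K := by
        by_contra hc
        push_neg at hc
        rw [hThigh (i+1) j hj (by omega)] at hf1
        simp at hf1
      rw [hTlow i j hj2 (by omega), hTlow (i+1) j hj hiK]
      simp
    · intro ht ht1
      have hiK : K ≤ i := by
        by_contra hc
        push_neg at hc
        rw [hTlow i j hj2 hc] at ht
        simp at ht
      obtain ⟨hj0, him⟩ := hdig (i+1) j hj (by omega)
      rw [hThigh i j hj2 hiK, hThigh (i+1) j hj (by omega)]
      simp only []
      exact gIdx_mono g Ng hNg (i - K) (i + 1 - K) (by omega) (by omega)
  · -- counts of (false, k)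
    intro k
    have hset : {x : ℕ × ℕ | x.2 < l x.1 ∧ T x = (false, k)} =
        (fun j => ((k, j) : ℕ × ℕ)) '' (Set.Iio (r k)) := by
      ext ⟨i, j⟩
      simp only [Set.mem_setOf_eq, Set.mem_image, Set.mem_Iio]
      constructor
      · rintro ⟨hdiag, hTx⟩
        have hiK : i < K := by
          by_contra hc
          push_neg at hc
          rw [hThigh i j hdiag hc] at hTx
          simp at hTx
        rw [hTlow i j hdiag hiK] at hTx
        have hik : i = k := (Prod.ext_iff.1 hTx).2
        subst hik
        refine ⟨j, ?_, rfl⟩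
        rw [hlr i hiK] at hdiag
        exact hdiag
      · rintro ⟨j', hj', hEq⟩
        have h1 : k = i := (Prod.ext_iff.1 hEq).1
        have h2 : j' = j := (Prod.ext_iff.1 hEq).2
        rw [← h1, ← h2]
        have hiK : k < K := by
          have h3 : r k ≠ 0 := by omega
          have h4 := hrK k
          omega
        have hdiag : j' < l k := by rw [hlr k hiK]; exact hj'
        exact ⟨hdiag, hTlow k j' hdiag hiK⟩
    rw [hset, Set.ncard_image_of_injective _ (fun x y hxy => (Prod.ext_iff.1 hxy).2)]
    have : Set.Iio (r k) = ↑(Finset.range (r k)) := by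
      ext x; simp
    rw [this, Set.ncard_coe_finset, Finset.card_range]
  · -- counts of (true, k)
    intro k
    have hk1 : psum g (k + 1) ≤ m := psum_le_total g Ng hNg (k + 1)
    have hset : {x : ℕ × ℕ | x.2 < l x.1 ∧ T x = (true, k)} =
        (fun i => ((i, 0) : ℕ × ℕ)) '' ↑(Finset.Ico (K + psum g k) (K + psum g (k + 1))) := by
      ext ⟨i, j⟩
      simp only [Set.mem_setOf_eq, Set.mem_image, Finset.coe_Ico, Set.mem_Ico]
      constructor
      · rintro ⟨hdiag, hTx⟩
        have hiK : K ≤ i := by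
          by_contra hc
          push_neg at hc
          rw [hTlow i j hdiag hc] at hTx
          simp at hTx
        obtain ⟨hj0, him⟩ := hdig i j hdiag hiK
        rw [hThigh i j hdiag hiK] at hTx
        have hik : gIdx g (i - K) = k := (Prod.ext_iff.1 hTx).2
        have hchar := (gIdx_eq_iff g Ng hNg (i - K) k (by omega)).1 hik
        exact ⟨i, ⟨by omega, by omega⟩, by rw [hj0]⟩
      · rintro ⟨i', ⟨hi1, hi2⟩, hEq⟩
        have h1 : i' = i := (Prod.ext_iff.1 hEq).1
        have h2 : (0 : ℕ) = j := (Prod.ext_iff.1 hEq).2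
        rw [← h1, ← h2]
        have hiK : K ≤ i' := by omega
        have hpk : psum g k ≤ psum g (k + 1) := psum_mono g (Nat.le_succ k)
        have him : i' < K + m := by omega
        have hdiag : (0 : ℕ) < l i' := by rw [hl1 i' hiK him]; omega
        refine ⟨hdiag, ?_⟩
        rw [hThigh i' 0 hdiag hiK]
        have h5 : gIdx g (i' - K) = k :=
          (gIdx_eq_iff g Ng hNg (i' - K) k (by omega)).2 ⟨by omega, by omega⟩
        rw [h5]
    rw [hset, Set.ncard_image_of_injective _ (fun x y hxy => (Prod.ext_iff.1 hxy).1),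
      Set.ncard_coe_finset, Nat.card_Ico]
    rw [psum_succ]
    omega

lemma K_spec (l : ℕ → ℕ) (hl : IsPartitionFun l) (i : ℕ) :
    l i = 0 ↔ sInf {N | l N = 0} ≤ i := by
  obtain ⟨N, hN⟩ := hl.2
  have hne : {N | l N = 0}.Nonempty := ⟨N, hN N le_rfl⟩
  constructor
  · intro h
    exact Nat.sInf_le h
  · intro h
    have h0 : l (sInf {N | l N = 0}) = 0 := Nat.sInf_mem hne
    have := hl.1 h
    omega

lemma finsum_eq_range (f : ℕ → ℕ) (N : ℕ) (hN : ∀ i, N ≤ i → f i = 0) :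
    ∑ᶠ i, f i = ∑ i ∈ range N, f i := by
  apply finsum_eq_sum_of_support_subset
  intro i hi
  simp only [Function.mem_support] at hi
  simp only [Finset.coe_range, Set.mem_Iio]
  by_contra hc
  exact hi (hN i (by omega))

lemma assemble (r v : ℕ → ℕ) (Kr Kv : ℕ)
    (hrK : ∀ i, r i = 0 ↔ Kr ≤ i) (hvK : ∀ i, v i = 0 ↔ Kv ≤ i)
    (hv2 : ∀ i, v i ≠ 0 → 2 ≤ v i)
    (h1 : ∀ m ≤ Kr, ∑ k ∈ range m, v k ≤ ∑ k ∈ range m, r k)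
    (h2 : ∀ m ≤ Kv, ∑ k ∈ range m, r k ≤ ∑ k ∈ range m, v k)
    (h3 : ∑ k ∈ range Kv, v k ≤ (∑ k ∈ range Kr, r k) + (Kv - Kr))
    (hK : Kr ≤ Kv) : r = v := by
  have heq : ∀ m, m ≤ Kr → ∑ k ∈ range m, v k = ∑ k ∈ range m, r k :=
    fun m hm => le_antisymm (h1 m hm) (h2 m (le_trans hm hK))
  have hKK : Kv = Kr := by
    by_contra hne
    have hlt : Kr < Kv := by omega
    have hsplit : ∑ k ∈ range Kv, v k
        = (∑ k ∈ range Kr, v k) + ∑ k ∈ Finset.Ico Kr Kv, v k := by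
      rw [Finset.range_eq_Ico, ← Finset.sum_Ico_consecutive _ (Nat.zero_le Kr) hK,
        ← Finset.range_eq_Ico]
    have hlow : ∀ k ∈ Finset.Ico Kr Kv, 2 ≤ v k := by
      intro k hk
      rw [Finset.mem_Ico] at hk
      apply hv2
      intro hc
      have := (hvK k).1 hc
      omega
    have hge : 2 * (Kv - Kr) ≤ ∑ k ∈ Finset.Ico Kr Kv, v k := by
      calc 2 * (Kv - Kr) = ∑ _k ∈ Finset.Ico Kr Kv, 2 := by
            rw [Finset.sum_const, Nat.card_Ico]; ring
        _ ≤ _ := Finset.sum_le_sum hlow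
    have heqK := heq Kr le_rfl
    omega
  funext k
  rcases Nat.lt_or_ge k Kr with hk | hk
  · have e1 := heq k (by omega)
    have e2 := heq (k + 1) (by omega)
    rw [Finset.sum_range_succ, Finset.sum_range_succ] at e2
    omega
  · rw [(hrK k).2 hk, (hvK k).2 (by omega)]

/-- The one-sided information extracted from the existence of a `(v|d)`-tableau of the
padded shape of `r`. -/
lemma side (r v g d : ℕ → ℕ) (Kr Kv Ng : ℕ)
    (hr : Antitone r) (hrK : ∀ i, r i = 0 ↔ Kr ≤ i)
    (hNg : ∀ i, Ng ≤ i → g i = 0)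
    (hex : ∃ T, IsSignedSSYT (padded r Kr (psum g Ng)) v d T) :
    (∀ m' ≤ Kr, ∑ k ∈ range m', v k ≤ ∑ k ∈ range m', r k) ∧
    (∑ k ∈ range Kv, v k ≤ (∑ k ∈ range Kr, r k) + (Kv - Kr)) := by
  obtain ⟨T, hT⟩ := hex
  set m := psum g Ng with hm
  have hlpart : IsPartitionFun (padded r Kr m) := padded_partition r Kr m hr hrK
  constructor
  · intro m' hm'
    have := partial_sum_le hlpart hT m'
    rwa [padded_sum r Kr m hrK m' hm'] at this
  · have hlle : ∀ i, Kr ≤ i → padded r Kr m i ≤ 1 := by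
      intro i hi
      unfold padded
      rw [if_neg (by omega)]
      split <;> omega
    have := total_le hlpart hT Kr Kv hlle
    rwa [padded_sum r Kr m hrK Kr le_rfl] at this

lemma exists_tableau (r v g d : ℕ → ℕ) (n Kr Ng Nr : ℕ)
    (hr : Antitone r) (hrK : ∀ i, r i = 0 ↔ Kr ≤ i)
    (hNr : ∀ i, Nr ≤ i → r i = 0)
    (hNg : ∀ i, Ng ≤ i → g i = 0)
    (hsum1 : (∑ᶠ i, r i) + (∑ᶠ i, g i) = n)
    (h : ∀ l : ℕ → ℕ, IsPartitionFun l → (∑ᶠ i, l i) = n →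
      sCount l r g = sCount l v d) :
    ∃ T, IsSignedSSYT (padded r Kr (psum g Ng)) v d T := by
  set m := psum g Ng with hmdef
  set lam := padded r Kr m with hlamdef
  have hlpart : IsPartitionFun lam := padded_partition r Kr m hr hrK
  have hlzero : ∀ i, Kr + m ≤ i → lam i = 0 := by
    intro i hi
    show padded r Kr m i = 0
    unfold padded
    rw [if_neg (by omega), if_neg (by omega)]
  have hlsum : (∑ᶠ i, lam i) = n := by
    rw [finsum_eq_range lam (Kr + m) hlzero]
    have ht : ∑ i ∈ range (Kr + m), lam i = (∑ i ∈ range Kr, r i) + m :=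
      padded_total r Kr m hrK
    rw [ht]
    rw [finsum_eq_range r Kr (fun i hi => (hrK i).2 hi),
      finsum_eq_range g Ng hNg] at hsum1
    have hm2 : (∑ i ∈ range Ng, g i) = m := rfl
    omega
  have hmem := canon_mem r g Kr Ng hr hrK hNg
  have hfin := ssyt_finite lam r g hlpart ⟨Nr, hNr⟩ ⟨Ng, hNg⟩
  have hpos : 0 < sCount lam r g := by
    unfold sCount
    exact (Set.ncard_pos hfin).2 ⟨_, hmem⟩
  rw [h lam hlpart hlsum] at hpos
  have hne : {T : ℕ × ℕ → Bool × ℕ | IsSignedSSYT lam v d T}.Nonempty :=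
    Set.nonempty_of_ncard_ne_zero (by unfold sCount at hpos; omega)
  obtain ⟨T, hT⟩ := hne
  exact ⟨T, hT⟩

end Stmt7Aux

/-- Let `ρ, ν` be partitions all of whose parts are at least `2`, and
let `γ, δ` be partitions with `|ρ|+|γ| = n = |ν|+|δ|`.  If for every partition `λ` of `n`
the number of semistandard `λ`-tableaux of type `(ρ|γ)` equals the number of semistandard
`λ`-tableaux of type `(ν|δ)`, then `ρ = ν`. -/
theorem stmt7 (n : ℕ) (r v g d : ℕ → ℕ)
    (hr : IsPartitionFun r) (hv : IsPartitionFun v)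
    (hr2 : ∀ i, r i ≠ 0 → 2 ≤ r i) (hv2 : ∀ i, v i ≠ 0 → 2 ≤ v i)
    (hg : IsPartitionFun g) (hd : IsPartitionFun d)
    (hsum1 : (∑ᶠ i, r i) + (∑ᶠ i, g i) = n)
    (hsum2 : (∑ᶠ i, v i) + (∑ᶠ i, d i) = n)
    (h : ∀ l : ℕ → ℕ, IsPartitionFun l → (∑ᶠ i, l i) = n →
      sCount l r g = sCount l v d) :
    r = v := by
  classical
  obtain ⟨Nr, hNr⟩ := hr.2
  obtain ⟨Nv, hNv⟩ := hv.2
  obtain ⟨Ng, hNg⟩ := hg.2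
  obtain ⟨Nd, hNd⟩ := hd.2
  have hrK := Stmt7Aux.K_spec r hr
  have hvK := Stmt7Aux.K_spec v hv
  set Kr := sInf {N | r N = 0} with hKrdef
  set Kv := sInf {N | v N = 0} with hKvdef
  have hex1 := Stmt7Aux.exists_tableau r v g d n Kr Ng Nr hr.1 hrK hNr hNg hsum1 h
  have h' : ∀ l : ℕ → ℕ, IsPartitionFun l → (∑ᶠ i, l i) = n →
      sCount l v d = sCount l r g := fun l hl hs => (h l hl hs).symm
  have hex2 := Stmt7Aux.exists_tableau v r d g n Kv Nd Nv hv.1 hvK hNv hNd hsum2 h'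
  obtain ⟨s1a, s1b⟩ := Stmt7Aux.side r v g d Kr Kv Ng hr.1 hrK hNg hex1
  obtain ⟨s2a, s2b⟩ := Stmt7Aux.side v r d g Kv Kr Nd hv.1 hvK hNd hex2
  rcases le_total Kr Kv with hK | hK
  · exact Stmt7Aux.assemble r v Kr Kv hrK hvK hv2 s1a s2a s1b hK
  · exact (Stmt7Aux.assemble v r Kv Kr hvK hrK hr2 s2a s1a s2b hK).symm
end

section
/- Let λ be a partition of n and (α|β) a pair of compositions of n with λ_1 = α_1. Then the number of semistandard λ-tableaux of type (α|β) equals the number of semistandard λ̄-tableaux of type (ᾱ|β), where λ̄ and ᾱ are obtained from λ and α by removing the first part: s^λ_{(α|β)} = s^{λ̄}_{(ᾱ|β)}. -/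
open scoped BigOperators

/-- shift of counting sets: if nothing in row 0 satisfies `Q`. -/
lemma ncard_shift (Q : ℕ × ℕ → Prop) (h0 : ∀ j, ¬ Q (0, j)) :
    {x : ℕ × ℕ | Q x}.ncard = {x : ℕ × ℕ | Q (x.1 + 1, x.2)}.ncard := by
  have himg : {x : ℕ × ℕ | Q x} =
      (fun x : ℕ × ℕ => (x.1 + 1, x.2)) '' {x | Q (x.1 + 1, x.2)} := by
    ext ⟨i, j⟩
    cases i with
    | zero => simp [h0 j]
    | succ i =>
        constructor
        · intro h; exact ⟨(i, j), h, rfl⟩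
        · rintro ⟨⟨i', j'⟩, h, heq⟩
          obtain ⟨rfl, rfl⟩ : i' = i ∧ j' = j := by
            simpa [Prod.ext_iff] using heq
          exact h
  rw [himg, Set.ncard_image_of_injective]
  intro x y h
  simpa [Prod.ext_iff] using h

/-- strict increase of values down a column of `false`-cells. -/
lemma colStrict {l a b : ℕ → ℕ} {T : ℕ × ℕ → Bool × ℕ}
    (hl : Antitone l) (hT : IsSignedSSYT l a b T) :
    ∀ d i j, j < l (i + d + 1) → (T (i + d + 1, j)).1 = false →
      (T (i, j)).1 = false ∧ (T (i, j)).2 < (T (i + d + 1, j)).2 := by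
  obtain ⟨-, -, h3, -, h5, -, -⟩ := hT
  intro d
  induction d with
  | zero =>
      intro i j hj hf
      exact ⟨h3 i j hj hf, (h5 i j hj).1 (h3 i j hj hf) hf⟩
  | succ d ih =>
      intro i j hj hf
      have hj' : j < l (i + d + 1) := lt_of_lt_of_le hj (hl (by omega))
      have hf' : (T (i + d + 1, j)).1 = false := h3 (i + d + 1) j hj hf
      obtain ⟨hfi, hlt⟩ := ih i j hj' hf'
      exact ⟨hfi, lt_trans hlt ((h5 (i + d + 1) j hj).1 hf' hf)⟩

/-- no `(false,0)` cell strictly below the first row. -/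
lemma no_c0_below {l a b : ℕ → ℕ} {T : ℕ × ℕ → Bool × ℕ}
    (hl : Antitone l) (hT : IsSignedSSYT l a b T) :
    ∀ i j, j < l (i + 1) → T (i + 1, j) ≠ (false, 0) := by
  intro i j hj heq
  have := colStrict hl hT i 0 j (by simpa using hj) (by simp [heq])
  have h2 := this.2
  rw [show (0:ℕ) + i + 1 = i + 1 by omega, heq] at h2
  exact absurd h2 (by simp)

/-- the whole first row consists of `(false, 0)` cells. -/
lemma row0_all {l a b : ℕ → ℕ} {T : ℕ × ℕ → Bool × ℕ}
    (hl : Antitone l) (h1 : l 0 = a 0) (hT : IsSignedSSYT l a b T) :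
    ∀ j, T (0, j) = (false, 0) := by
  set S0 : Set (ℕ × ℕ) := {x : ℕ × ℕ | x.2 < l x.1 ∧ T x = (false, 0)} with hS0
  have hinj : Set.InjOn Prod.snd S0 := by
    rintro ⟨i, j⟩ hx ⟨i', j'⟩ hy (rfl : j = j')
    rcases lt_trichotomy i i' with h | h | h
    · exfalso
      obtain ⟨d, rfl⟩ : ∃ d, i' = i + d + 1 := ⟨i' - i - 1, by omega⟩
      have := (colStrict hl hT d i j hy.1 (by simp [hy.2])).2
      rw [hx.2, hy.2] at this
      exact absurd this (by simp)
    · simp [h]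
    · exfalso
      obtain ⟨d, rfl⟩ : ∃ d, i = i' + d + 1 := ⟨i - i' - 1, by omega⟩
      have := (colStrict hl hT d i' j hx.1 (by simp [hx.2])).2
      rw [hx.2, hy.2] at this
      exact absurd this (by simp)
  have hsub : Prod.snd '' S0 ⊆ Set.Iio (l 0) := by
    rintro j ⟨⟨i, j'⟩, hx, rfl⟩
    exact lt_of_lt_of_le hx.1 (hl (Nat.zero_le i))
  have hfin : S0.Finite :=
    Set.Finite.of_finite_image ((Set.finite_Iio _).subset hsub) hinj
  have hcard : (Prod.snd '' S0).ncard = l 0 := by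
    rw [Set.ncard_image_of_injOn hinj, hT.2.2.2.2.2.1 0, h1]
  have hIio : (Set.Iio (l 0)).ncard = l 0 := by
    rw [← Finset.coe_Iio, Set.ncard_coe_finset, Nat.card_Iio]
  have heq : Prod.snd '' S0 = Set.Iio (l 0) :=
    Set.eq_of_subset_of_ncard_le hsub (by rw [hcard, hIio]) (Set.finite_Iio _)
  intro j
  by_cases hj : j < l 0
  · have : j ∈ Prod.snd '' S0 := heq ▸ hj
    obtain ⟨⟨i, j2⟩, hx, (hj2 : j2 = j)⟩ := this
    rw [← hj2]
    cases i with
    | zero => exact hx.2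
    | succ i => exact absurd hx.2 (no_c0_below hl hT i j2 hx.1)
  · exact hT.1 0 j (by omega)

def shiftDown (p : Bool × ℕ) : Bool × ℕ := if p.1 then p else (false, p.2 - 1)
def shiftUp (p : Bool × ℕ) : Bool × ℕ := if p.1 then p else (false, p.2 + 1)

@[simp] lemma shiftDown_fst (p : Bool × ℕ) : (shiftDown p).1 = p.1 := by
  rcases p with ⟨b, k⟩; cases b <;> simp [shiftDown]
@[simp] lemma shiftUp_fst (p : Bool × ℕ) : (shiftUp p).1 = p.1 := by
  rcases p with ⟨b, k⟩; cases b <;> simp [shiftUp]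
lemma shiftDown_shiftUp (p : Bool × ℕ) : shiftDown (shiftUp p) = p := by
  rcases p with ⟨b, k⟩; cases b <;> simp [shiftUp, shiftDown]
lemma shiftUp_ne_c0 (p : Bool × ℕ) : shiftUp p ≠ (false, 0) := by
  rcases p with ⟨b, k⟩; cases b <;> simp [shiftUp]
lemma shiftUp_eq_false_iff (p : Bool × ℕ) (k : ℕ) :
    shiftUp p = (false, k + 1) ↔ p = (false, k) := by
  rcases p with ⟨b, k'⟩; cases b <;> simp [shiftUp]
lemma shiftUp_eq_true_iff (p : Bool × ℕ) (k : ℕ) :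
    shiftUp p = (true, k) ↔ p = (true, k) := by
  rcases p with ⟨b, k'⟩; cases b <;> simp [shiftUp]
lemma shiftDown_eq_true_iff (p : Bool × ℕ) (k : ℕ) :
    shiftDown p = (true, k) ↔ p = (true, k) := by
  rcases p with ⟨b, k'⟩; cases b <;> simp [shiftDown]

def Fmap (T : ℕ × ℕ → Bool × ℕ) : ℕ × ℕ → Bool × ℕ :=
  fun x => shiftDown (T (x.1 + 1, x.2))

def Gmap (l : ℕ → ℕ) (T' : ℕ × ℕ → Bool × ℕ) : ℕ × ℕ → Bool × ℕ :=
  fun x => match x with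
  | (0, _) => (false, 0)
  | (i + 1, j) => if j < l (i + 1) then shiftUp (T' (i, j)) else (false, 0)

/-- in rows below the first, `false` cells have value `≥ 1`. -/
lemma val_pos_below {l a b : ℕ → ℕ} {T : ℕ × ℕ → Bool × ℕ}
    (hl : Antitone l) (hT : IsSignedSSYT l a b T) :
    ∀ i j, j < l (i + 1) → (T (i + 1, j)).1 = false → 1 ≤ (T (i + 1, j)).2 := by
  intro i j hj hf
  by_contra h
  exact no_c0_below hl hT i j hj (Prod.ext hf (by omega))

lemma forward {l a b : ℕ → ℕ} {T : ℕ × ℕ → Bool × ℕ}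
    (hl : Antitone l) (h1 : l 0 = a 0) (hT : IsSignedSSYT l a b T) :
    IsSignedSSYT (fun i => l (i + 1)) (fun i => a (i + 1)) b (Fmap T) := by
  obtain ⟨c1, c2, c3, c4, c5, c6, c7⟩ := hT
  have hval := val_pos_below hl ⟨c1, c2, c3, c4, c5, c6, c7⟩
  have hrow := row0_all hl h1 ⟨c1, c2, c3, c4, c5, c6, c7⟩
  refine ⟨?_, ?_, ?_, ?_, ?_, ?_, ?_⟩
  · intro i j hj
    simp [Fmap, c1 (i + 1) j hj, shiftDown]
  · intro i j j' hjj hj' hf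
    simpa [Fmap] using c2 (i + 1) j j' hjj hj' (by simpa [Fmap] using hf)
  · intro i j hj hf
    simpa [Fmap] using c3 (i + 1) j hj (by simpa [Fmap] using hf)
  · intro i j hj
    constructor
    · intro hf hf'
      simp only [Fmap, shiftDown_fst] at hf hf'
      have h4 := (c4 (i + 1) j hj).1 hf hf'
      simp only [Fmap, shiftDown, hf, hf', Bool.false_eq_true, if_false]
      omega
    · intro ht ht'
      simp only [Fmap, shiftDown_fst] at ht ht'
      have h4 := (c4 (i + 1) j hj).2 ht ht'
      simpa only [Fmap, shiftDown, ht, ht', if_true] using h4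
  · intro i j hj
    constructor
    · intro hf hf'
      simp only [Fmap, shiftDown_fst] at hf hf'
      have h5 := (c5 (i + 1) j hj).1 hf hf'
      have hp : 1 ≤ (T (i + 1, j)).2 :=
        hval i j (lt_of_lt_of_le hj (hl (by omega))) hf
      simp only [Fmap, shiftDown, hf, hf', Bool.false_eq_true, if_false]
      omega
    · intro ht ht'
      simp only [Fmap, shiftDown_fst] at ht ht'
      have h5 := (c5 (i + 1) j hj).2 ht ht'
      simpa only [Fmap, shiftDown, ht, ht', if_true] using h5
  · intro k
    have hset : {x : ℕ × ℕ | x.2 < l (x.1 + 1) ∧ Fmap T x = (false, k)} =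
        {x : ℕ × ℕ | x.2 < l (x.1 + 1) ∧ T (x.1 + 1, x.2) = (false, k + 1)} := by
      ext ⟨i, j⟩
      simp only [Set.mem_setOf_eq, Fmap]
      constructor
      · rintro ⟨hj, heq⟩
        refine ⟨hj, ?_⟩
        have hf : (T (i + 1, j)).1 = false := by
          have := congrArg Prod.fst heq; simpa using this
        have hv : (T (i + 1, j)).2 - 1 = k := by
          have := congrArg Prod.snd heq
          simpa [shiftDown, hf] using this
        have := hval i j hj hf
        exact Prod.ext hf (by omega)
      · rintro ⟨hj, heq⟩
        exact ⟨hj, by simp [heq, shiftDown]⟩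
    rw [hset]
    have := ncard_shift (fun x => x.2 < l x.1 ∧ T x = (false, k + 1))
      (fun j hQ => by
        have := hQ.2
        rw [hrow j] at this
        simp [Prod.ext_iff] at this)
    rw [show {x : ℕ × ℕ | x.2 < l (x.1 + 1) ∧ T (x.1 + 1, x.2) = (false, k + 1)} =
        {x : ℕ × ℕ | (fun y : ℕ × ℕ => y.2 < l y.1 ∧ T y = (false, k + 1)) (x.1 + 1, x.2)}
        from rfl, ← this]
    exact c6 (k + 1)
  · intro k
    have hset : {x : ℕ × ℕ | x.2 < l (x.1 + 1) ∧ Fmap T x = (true, k)} =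
        {x : ℕ × ℕ | x.2 < l (x.1 + 1) ∧ T (x.1 + 1, x.2) = (true, k)} := by
      ext ⟨i, j⟩
      simp only [Set.mem_setOf_eq, Fmap, shiftDown_eq_true_iff]
    rw [hset]
    have := ncard_shift (fun x => x.2 < l x.1 ∧ T x = (true, k))
      (fun j hQ => by
        have := hQ.2
        rw [hrow j] at this
        simp [Prod.ext_iff] at this)
    rw [show {x : ℕ × ℕ | x.2 < l (x.1 + 1) ∧ T (x.1 + 1, x.2) = (true, k)} =
        {x : ℕ × ℕ | (fun y : ℕ × ℕ => y.2 < l y.1 ∧ T y = (true, k)) (x.1 + 1, x.2)}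
        from rfl, ← this]
    exact c7 k

lemma backward {l a b : ℕ → ℕ} {T' : ℕ × ℕ → Bool × ℕ}
    (hl : Antitone l) (h1 : l 0 = a 0)
    (hT' : IsSignedSSYT (fun i => l (i + 1)) (fun i => a (i + 1)) b T') :
    IsSignedSSYT l a b (Gmap l T') := by
  obtain ⟨c1, c2, c3, c4, c5, c6, c7⟩ := hT'
  refine ⟨?_, ?_, ?_, ?_, ?_, ?_, ?_⟩
  · intro i j hij
    cases i with
    | zero => rfl
    | succ i => simp [Gmap, show ¬ j < l (i + 1) by omega]
  · intro i j j' hjj hj' hf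
    cases i with
    | zero => simp [Gmap]
    | succ i =>
        have hf' : (T' (i, j')).1 = false := by
          simpa [Gmap, hj'] using hf
        have := c2 i j j' hjj hj' hf'
        simpa [Gmap, show j < l (i + 1) by omega] using this
  · intro i j hj hf
    cases i with
    | zero => simp [Gmap]
    | succ i =>
        have hf' : (T' (i + 1, j)).1 = false := by
          simpa [Gmap, hj] using hf
        have := c3 i j hj hf'
        simpa [Gmap, show j < l (i + 1) from lt_of_lt_of_le hj (hl (by omega))]
          using this
  · intro i j hj
    cases i with
    | zero =>
        constructor
        · intro _ _; simp [Gmap]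
        · intro ht; exact absurd ht (by simp [Gmap])
    | succ i =>
        have hj1 : j < l (i + 1) := by omega
        have hj2 : j + 1 < l (i + 1) := hj
        constructor
        · intro hf hf'
          simp only [Gmap, hj1, hj2, if_true, shiftUp_fst] at hf hf' ⊢
          have h4 := (c4 i j hj).1 hf hf'
          simp only [shiftUp, hf, hf', Bool.false_eq_true, if_false]
          omega
        · intro ht ht'
          simp only [Gmap, hj1, hj2, if_true, shiftUp_fst] at ht ht' ⊢
          have h4 := (c4 i j hj).2 ht ht'
          simpa only [shiftUp, ht, ht', if_true] using h4
  · intro i j hj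
    cases i with
    | zero =>
        constructor
        · intro _ hf'
          simp only [Gmap, hj, if_true, shiftUp_fst] at hf' ⊢
          simp [shiftUp, hf']
        · intro ht; exact absurd ht (by simp [Gmap])
    | succ i =>
        have hj1 : j < l (i + 1) := lt_of_lt_of_le hj (hl (by omega))
        constructor
        · intro hf hf'
          simp only [Gmap, hj1, hj, if_true, shiftUp_fst] at hf hf' ⊢
          have h5 := (c5 i j hj).1 hf hf'
          simp only [shiftUp, hf, hf', Bool.false_eq_true, if_false]
          omega
        · intro ht ht'
          simp only [Gmap, hj1, hj, if_true, shiftUp_fst] at ht ht' ⊢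
          have h5 := (c5 i j hj).2 ht ht'
          simpa only [shiftUp, ht, ht', if_true] using h5
  · intro k
    cases k with
    | zero =>
        have hset : {x : ℕ × ℕ | x.2 < l x.1 ∧ Gmap l T' x = (false, 0)} =
            (fun j => ((0 : ℕ), j)) '' Set.Iio (l 0) := by
          ext ⟨i, j⟩
          cases i with
          | zero => simp [Gmap]
          | succ i =>
              simp only [Set.mem_setOf_eq, Set.mem_image, Set.mem_Iio]
              constructor
              · rintro ⟨hj, heq⟩
                exact absurd (by simpa [Gmap, hj] using heq) (shiftUp_ne_c0 _)
              · rintro ⟨j', _, heq⟩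
                exact absurd (congrArg Prod.fst heq) (by simp)
        rw [hset, Set.ncard_image_of_injective _ (fun x y h => by simpa using h),
          ← Finset.coe_Iio, Set.ncard_coe_finset, Nat.card_Iio, h1]
    | succ k =>
        have h0 : ∀ j, ¬ (((0 : ℕ), j).2 < l (0 : ℕ) ∧ Gmap l T' (0, j) = (false, k + 1)) := by
          rintro j ⟨-, heq⟩
          exact absurd (congrArg Prod.snd heq) (by simp [Gmap])
        have := ncard_shift (fun x => x.2 < l x.1 ∧ Gmap l T' x = (false, k + 1)) h0
        rw [this]
        have hset : {x : ℕ × ℕ | (x.1 + 1, x.2).2 < l (x.1 + 1, x.2).1 ∧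
            Gmap l T' (x.1 + 1, x.2) = (false, k + 1)} =
            {x : ℕ × ℕ | x.2 < l (x.1 + 1) ∧ T' x = (false, k)} := by
          ext ⟨i, j⟩
          simp only [Set.mem_setOf_eq]
          constructor
          · rintro ⟨hj, heq⟩
            refine ⟨hj, ?_⟩
            rw [show Gmap l T' (i + 1, j) = shiftUp (T' (i, j)) by simp [Gmap, hj],
              shiftUp_eq_false_iff] at heq
            exact heq
          · rintro ⟨hj, heq⟩
            exact ⟨hj, by simp [Gmap, hj, shiftUp_eq_false_iff, heq]⟩
        rw [hset]
        exact c6 k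
  · intro k
    have h0 : ∀ j, ¬ (((0 : ℕ), j).2 < l (0 : ℕ) ∧ Gmap l T' (0, j) = (true, k)) := by
      rintro j ⟨-, heq⟩
      exact absurd (congrArg Prod.fst heq) (by simp [Gmap])
    have := ncard_shift (fun x => x.2 < l x.1 ∧ Gmap l T' x = (true, k)) h0
    rw [this]
    have hset : {x : ℕ × ℕ | (x.1 + 1, x.2).2 < l (x.1 + 1, x.2).1 ∧
        Gmap l T' (x.1 + 1, x.2) = (true, k)} =
        {x : ℕ × ℕ | x.2 < l (x.1 + 1) ∧ T' x = (true, k)} := by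
      ext ⟨i, j⟩
      simp only [Set.mem_setOf_eq]
      constructor
      · rintro ⟨hj, heq⟩
        refine ⟨hj, ?_⟩
        rw [show Gmap l T' (i + 1, j) = shiftUp (T' (i, j)) by simp [Gmap, hj],
          shiftUp_eq_true_iff] at heq
        exact heq
      · rintro ⟨hj, heq⟩
        exact ⟨hj, by simp [Gmap, hj, shiftUp_eq_true_iff, heq]⟩
    rw [hset]
    exact c7 k

lemma FG {l a b : ℕ → ℕ} {T' : ℕ × ℕ → Bool × ℕ}
    (hT' : IsSignedSSYT (fun i => l (i + 1)) (fun i => a (i + 1)) b T') :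
    Fmap (Gmap l T') = T' := by
  funext x
  obtain ⟨i, j⟩ := x
  by_cases hj : j < l (i + 1)
  · simp [Fmap, Gmap, hj, shiftDown_shiftUp]
  · rw [show Fmap (Gmap l T') (i, j) = shiftDown (Gmap l T' (i + 1, j)) from rfl]
    simp only [Gmap, hj, if_false]
    rw [hT'.1 i j (Nat.le_of_not_lt hj)]
    simp [shiftDown]

lemma GF {l a b : ℕ → ℕ} {T : ℕ × ℕ → Bool × ℕ}
    (hl : Antitone l) (h1 : l 0 = a 0) (hT : IsSignedSSYT l a b T) :
    Gmap l (Fmap T) = T := by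
  funext x
  obtain ⟨i, j⟩ := x
  cases i with
  | zero => exact (row0_all hl h1 hT j).symm
  | succ i =>
      by_cases hj : j < l (i + 1)
      · rw [show Gmap l (Fmap T) (i + 1, j) = shiftUp (Fmap T (i, j)) by simp [Gmap, hj]]
        rw [show Fmap T (i, j) = shiftDown (T (i + 1, j)) from rfl]
        rcases hfst : (T (i + 1, j)).1 with _ | _
        · have hv := val_pos_below hl hT i j hj hfst
          rcases hp : T (i + 1, j) with ⟨bb, kk⟩
          rw [hp] at hfst hv
          cases bb
          · simp only [shiftDown, shiftUp, hfst]
            simp at hv ⊢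
            omega
          · simp at hfst
        · rcases hp : T (i + 1, j) with ⟨bb, kk⟩
          rw [hp] at hfst
          cases bb
          · simp at hfst
          · simp [shiftDown, shiftUp]
      · simp only [Gmap, hj, if_false]
        exact (hT.1 (i + 1) j (by omega)).symm

theorem stmt18' (l a b : ℕ → ℕ)
    (hl : Antitone l) (h1 : l 0 = a 0) :
    {T : ℕ × ℕ → Bool × ℕ | IsSignedSSYT l a b T}.ncard =
      {T : ℕ × ℕ → Bool × ℕ |
        IsSignedSSYT (fun i => l (i + 1)) (fun i => a (i + 1)) b T}.ncard := by
  have himg : {T : ℕ × ℕ → Bool × ℕ |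
      IsSignedSSYT (fun i => l (i + 1)) (fun i => a (i + 1)) b T} =
      Fmap '' {T : ℕ × ℕ → Bool × ℕ | IsSignedSSYT l a b T} := by
    ext T'
    constructor
    · intro hT'
      exact ⟨Gmap l T', backward hl h1 hT', FG hT'⟩
    · rintro ⟨T, hT, rfl⟩
      exact forward hl h1 hT
  rw [himg, Set.ncard_image_of_injOn]
  intro T1 h1' T2 h2' heq
  calc T1 = Gmap l (Fmap T1) := (GF hl h1 h1').symm
    _ = Gmap l (Fmap T2) := by rw [heq]
    _ = T2 := GF hl h1 h2'

/-- Let `λ` be a partition of `n` and `(α|β)` a pair of compositions of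
`n` with `λ_1 = α_1`.  Then the number of semistandard `λ`-tableaux of type `(α|β)`
equals the number of semistandard `λ̄`-tableaux of type `(ᾱ|β)`, where `λ̄, ᾱ` are
obtained by deleting the first part: `s^λ_{(α|β)} = s^{λ̄}_{(ᾱ|β)}`. -/
theorem stmt18 (n : ℕ) (l a b : ℕ → ℕ)
    (hl : IsPartitionFun l) (hln : ∑ᶠ i, l i = n)
    (hafin : {i | a i ≠ 0}.Finite) (hbfin : {i | b i ≠ 0}.Finite)
    (hsum : (∑ᶠ i, a i) + (∑ᶠ i, b i) = n)
    (h1 : l 0 = a 0) :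
    sCount l a b = sCount (fun i => l (i + 1)) (fun i => a (i + 1)) b :=
  stmt18' l a b hl.1 h1
end
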